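/- A (z₀,z₁)-∃∀-type existential composition lemma: if φ₁(z₀,z₁) is equivalent to a disjunction of ∃∀-formulas whose free variables z₀,z₁ are the endpoints of the quantified increasing tuple, and φ₂(z₁,z₂) likewise, then ∃z₁ (z₀ < z₁ < z₂ ∧ φ₁(z₀,z₁) ∧ φ₂(z₁,z₂)) is equivalent to a disjunction of such formulas in (z₀,z₂). -/

import Mathlib

/-- Syntax of the temporal logic TL(U,S) with strict Until and strict Since. -/
inductive TL (σ : Type) : Type
  | tt : TL σ
  | atom : σ → TL σ
  | neg : TL σ → TL σ
  | or : TL σ → TL σ → TL σ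
  | and : TL σ → TL σ → TL σ
  | until_ : TL σ → TL σ → TL σ
  | since : TL σ → TL σ → TL σ

/-- Semantics of TL(U,S) over a chain: a linear order `T` with interpretation `I`. -/
def TL.sat {σ T : Type} [LinearOrder T] (I : σ → Set T) : TL σ → T → Prop
  | .tt, _ => True
  | .atom p, t => t ∈ I p
  | .neg F, t => ¬ TL.sat I F t
  | .or F G, t => TL.sat I F t ∨ TL.sat I G t
  | .and F G, t => TL.sat I F t ∧ TL.sat I G t
  | .until_ F G, t => ∃ t', t < t' ∧ TL.sat I G t' ∧ ∀ s, t < s → s < t' → TL.sat I F s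
  | .since F G, t => ∃ t', t' < t ∧ TL.sat I G t' ∧ ∀ s, t' < s → s < t → TL.sat I F s

/-- K⁻(F) := ¬((¬F) S True). -/
def TL.kminus {σ : Type} (F : TL σ) : TL σ := .neg (.since (.neg F) .tt)

/-- K⁺(F) := ¬((¬F) U True). -/
def TL.kplus {σ : Type} (F : TL σ) : TL σ := .neg (.until_ (.neg F) .tt)

/-- G F := ¬(True U ¬F): F holds everywhere strictly after the current point. -/
def TL.G {σ : Type} (F : TL σ) : TL σ := .neg (.until_ .tt (.neg F))

/-- G⁻ F := ¬(True S ¬F): F holds everywhere strictly before the current point. -/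
def TL.Gm {σ : Type} (F : TL σ) : TL σ := .neg (.since .tt (.neg F))

/-- Syntax of FOMLO: first-order monadic logic of order (variables are natural numbers). -/
inductive FO (σ : Type) : Type
  | lt : ℕ → ℕ → FO σ
  | eq : ℕ → ℕ → FO σ
  | atom : σ → ℕ → FO σ
  | neg : FO σ → FO σ
  | or : FO σ → FO σ → FO σ
  | and : FO σ → FO σ → FO σ
  | ex : ℕ → FO σ → FO σ
  | all : ℕ → FO σ → FO σ

/-- Semantics of FOMLO over a chain, with a valuation of the variables. -/
def FO.sat {σ T : Type} [LinearOrder T] (I : σ → Set T) : FO σ → (ℕ → T) → Prop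
  | .lt i j, v => v i < v j
  | .eq i j, v => v i = v j
  | .atom p i, v => v i ∈ I p
  | .neg φ, v => ¬ FO.sat I φ v
  | .or φ ψ, v => FO.sat I φ v ∨ FO.sat I ψ v
  | .and φ ψ, v => FO.sat I φ v ∧ FO.sat I ψ v
  | .ex i φ, v => ∃ t, FO.sat I φ (Function.update v i t)
  | .all i φ, v => ∀ t, FO.sat I φ (Function.update v i t)

/-- Free variables of a FOMLO formula. -/
def FO.freeVars {σ : Type} : FO σ → Set ℕ
  | .lt i j => {i, j}
  | .eq i j => {i, j}
  | .atom _ i => {i}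
  | .neg φ => φ.freeVars
  | .or φ ψ => φ.freeVars ∪ ψ.freeVars
  | .and φ ψ => φ.freeVars ∪ ψ.freeVars
  | .ex i φ => φ.freeVars \ {i}
  | .all i φ => φ.freeVars \ {i}

/-- Quantifier-free one-variable (propositional) formulas over the monadic predicates. -/
inductive QF (σ : Type) : Type
  | tt : QF σ
  | atom : σ → QF σ
  | neg : QF σ → QF σ
  | or : QF σ → QF σ → QF σ
  | and : QF σ → QF σ → QF σ

def QF.sat {σ T : Type} (I : σ → Set T) : QF σ → T → Prop
  | .tt, _ => True
  | .atom p, t => t ∈ I p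
  | .neg φ, t => ¬ QF.sat I φ t
  | .or φ ψ, t => QF.sat I φ t ∨ QF.sat I ψ t
  | .and φ ψ, t => QF.sat I φ t ∧ QF.sat I ψ t

/-- The propositional temporal formula corresponding to a quantifier-free formula. -/
def QF.toTL {σ : Type} : QF σ → TL σ
  | .tt => .tt
  | .atom p => .atom p
  | .neg φ => .neg φ.toTL
  | .or φ ψ => .or φ.toTL ψ.toTL
  | .and φ ψ => .and φ.toTL ψ.toTL

/-- An ∃∀-formula over the monadic signature `σ` with free variables `z₀,…,z_m`:
`∃ x_n … x₀, (⋀_k z_k = x_{idx k}) ∧ x₀ < … < x_n ∧ ⋀_j α_j(x_j) ∧`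
each `βmid j` holds throughout the open interval `(x_j, x_{j+1})`,
`βhi` holds everywhere after `x_n`, and `βlo` holds everywhere before `x₀`. -/
structure EAForm (σ : Type) (m : ℕ) where
  n : ℕ
  idx : Fin (m + 1) → Fin (n + 1)
  α : Fin (n + 1) → QF σ
  βmid : Fin n → QF σ
  βlo : QF σ
  βhi : QF σ

/-- Semantics of ∃∀-formulas. -/
def EAForm.sat {σ : Type} {m : ℕ} {T : Type} [LinearOrder T] (e : EAForm σ m)
    (I : σ → Set T) (z : Fin (m + 1) → T) : Prop :=
  ∃ x : Fin (e.n + 1) → T, StrictMono x ∧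
    (∀ k, z k = x (e.idx k)) ∧
    (∀ j, (e.α j).sat I (x j)) ∧
    (∀ j : Fin e.n, ∀ y, x j.castSucc < y → y < x j.succ → (e.βmid j).sat I y) ∧
    (∀ y, y < x 0 → e.βlo.sat I y) ∧
    (∀ y, x (Fin.last e.n) < y → e.βhi.sat I y)

/-- Satisfaction of a disjunction of ∃∀-formulas. -/
def EADisj {σ : Type} {m : ℕ} {T : Type} [LinearOrder T] (L : List (EAForm σ m))
    (I : σ → Set T) (z : Fin (m + 1) → T) : Prop :=
  ∃ f ∈ L, f.sat I z

/-- A linear order is Dedekind complete if every nonempty bounded-above subset has a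
least upper bound and every nonempty bounded-below subset has a greatest lower bound. -/
def DedekindComplete (T : Type) [LinearOrder T] : Prop :=
  (∀ S : Set T, S.Nonempty → BddAbove S → ∃ a, IsLUB S a) ∧
  (∀ S : Set T, S.Nonempty → BddBelow S → ∃ a, IsGLB S a)

/-- The canonical TL(U,S)-expansion of a chain: one unary predicate for each
TL(U,S)-formula `A`, interpreted as the set of points satisfying `A`. -/
def canonExp {σ T : Type} [LinearOrder T] (I : σ → Set T) : TL σ → Set T :=
  fun A => {t | A.sat I t}

/-- `[α₀,β₁,α₁,…,β_n,α_n](z₀,z₁)` : there are `z₀ = x₀ < x₁ < … < x_n = z₁` with each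
`a j` holding at `x_j` and `b j` holding throughout `(x_j, x_{j+1})`
(`b j` stands for `β_{j+1}`). -/
def chainSat {σ T : Type} [LinearOrder T] (I : σ → Set T) (n : ℕ) (a b : ℕ → QF σ)
    (z₀ z₁ : T) : Prop :=
  ∃ x : Fin (n + 1) → T, x 0 = z₀ ∧ x (Fin.last n) = z₁ ∧ StrictMono x ∧
    (∀ j : Fin (n + 1), (a j.val).sat I (x j)) ∧
    (∀ j : Fin n, ∀ y, x j.castSucc < y → y < x j.succ → (b j.val).sat I y)

/-- `nestU [(B₁,A₁),…,(B_k,A_k)] tail = B₁ U (A₁ ∧ (B₂ U (A₂ ∧ … (B_k U (A_k ∧ tail))…)))`. -/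
def nestU {σ : Type} : List (TL σ × TL σ) → TL σ → TL σ
  | [], tail => tail
  | (B, A) :: rest, tail => B.until_ (A.and (nestU rest tail))

/-- `nestS [(B₁,A₁),…,(B_k,A_k)] tail = B₁ S (A₁ ∧ (B₂ S (A₂ ∧ … (B_k S (A_k ∧ tail))…)))`. -/
def nestS {σ : Type} : List (TL σ × TL σ) → TL σ → TL σ
  | [], tail => tail
  | (B, A) :: rest, tail => B.since (A.and (nestS rest tail))

/-- `α_i` as a temporal formula, extended by `True` out of range. -/
def EAForm.aExt {σ : Type} {m : ℕ} (e : EAForm σ m) (i : ℕ) : TL σ :=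
  if h : i < e.n + 1 then (e.α ⟨i, h⟩).toTL else .tt

/-- `β_{i+1}` (interval `(x_i, x_{i+1})`) as a temporal formula, `True` out of range. -/
def EAForm.bExt {σ : Type} {m : ℕ} (e : EAForm σ m) (i : ℕ) : TL σ :=
  if h : i < e.n then (e.βmid ⟨i, h⟩).toTL else .tt

/-- The future part `A_k ∧ (B_{k+1} U (A_{k+1} ∧ … (A_n ∧ G B_{n+1})…))` of the
translation of a one-free-variable ∃∀-formula (with `z₀ = x_k`). -/
def EAForm.futureTL {σ : Type} (e : EAForm σ 0) : TL σ :=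
  (e.aExt (e.idx 0).val).and
    (nestU (List.ofFn (fun j : Fin (e.n - (e.idx 0).val) =>
        (e.bExt ((e.idx 0).val + j.val), e.aExt ((e.idx 0).val + j.val + 1))))
      e.βhi.toTL.G)

/-- The past part `A_k ∧ (B_k S (A_{k-1} ∧ … (A₀ ∧ G⁻ B₀)…))` of the translation. -/
def EAForm.pastTL {σ : Type} (e : EAForm σ 0) : TL σ :=
  (e.aExt (e.idx 0).val).and
    (nestS (List.ofFn (fun j : Fin (e.idx 0).val =>
        (e.bExt ((e.idx 0).val - 1 - j.val), e.aExt ((e.idx 0).val - 1 - j.val))))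
      e.βlo.toTL.Gm)

/-- `Fseq a b n j` is the temporal formula `F_{n-j}` where `F_n := α_n` and
`F_{i-1} := α_{i-1} ∧ (β_i U F_i)`; here `b i` stands for `β_{i+1}`. -/
def Fseq {σ : Type} (a b : ℕ → QF σ) (n : ℕ) : ℕ → TL σ
  | 0 => (a n).toTL
  | j + 1 => ((a (n - j - 1)).toTL).and (((b (n - j - 1)).toTL).until_ (Fseq a b n j))

/-- Syntax of the temporal logic TL(U,K⁻) with strict Until and the modality K⁻. -/
inductive TLK (σ : Type) : Type
  | tt : TLK σ
  | atom : σ → TLK σ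
  | neg : TLK σ → TLK σ
  | or : TLK σ → TLK σ → TLK σ
  | and : TLK σ → TLK σ → TLK σ
  | until_ : TLK σ → TLK σ → TLK σ
  | kminus : TLK σ → TLK σ

/-- Semantics of TL(U,K⁻): `K⁻(F)` holds at `t` iff `t = sup{t' < t : F(t')}`. -/
def TLK.sat {σ T : Type} [LinearOrder T] (I : σ → Set T) : TLK σ → T → Prop
  | .tt, _ => True
  | .atom p, t => t ∈ I p
  | .neg F, t => ¬ TLK.sat I F t
  | .or F G, t => TLK.sat I F t ∨ TLK.sat I G t
  | .and F G, t => TLK.sat I F t ∧ TLK.sat I G t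
  | .until_ F G, t => ∃ t', t < t' ∧ TLK.sat I G t' ∧ ∀ s, t < s → s < t' → TLK.sat I F s
  | .kminus F, t => IsLUB {t' | t' < t ∧ TLK.sat I F t'} t

/-- Syntactically future TL(U,K⁻) formulas: Boolean combinations of atoms and
Until-formulas. -/
inductive SynFuture {σ : Type} : TLK σ → Prop
  | tt : SynFuture .tt
  | atom (p : σ) : SynFuture (.atom p)
  | until_ (F G : TLK σ) : SynFuture (.until_ F G)
  | neg {F} : SynFuture F → SynFuture (.neg F)
  | or {F G} : SynFuture F → SynFuture G → SynFuture (.or F G)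
  | and {F G} : SynFuture F → SynFuture G → SynFuture (.and F G)

/-- The subchain of a chain restricted to `[t₀,∞)`: the interpretation induced on the
subtype `{t // t₀ ≤ t}`. -/
def restrictI {σ T : Type} (I : σ → Set T) [LinearOrder T] (t₀ : T) :
    σ → Set {t : T // t₀ ≤ t} :=
  fun p => {s | s.val ∈ I p}

/-- A (z₀,z₁)-∃∀ formula: either `z₀ > z₁`, or `z₀ = z₁`, or a formula
`[α₀,β₁,…,β_n,α_n](z₀,z₁)`. -/
inductive IntervalEA (σ : Type) : Type
  | gt : IntervalEA σ
  | eq : IntervalEA σ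
  | chain (n : ℕ) (a b : ℕ → QF σ) : IntervalEA σ

def IntervalEA.sat {σ T : Type} [LinearOrder T] (I : σ → Set T) :
    IntervalEA σ → T → T → Prop
  | .gt, z₀, z₁ => z₁ < z₀
  | .eq, z₀, z₁ => z₀ = z₁
  | .chain n a b, z₀, z₁ => chainSat I n a b z₀ z₁

/-
Two chains `z₀ = x₀ < … < x_{n₁} = z₁` and `z₁ = y₀ < … < y_{n₂} = z₂` splice into one chain
from `z₀` to `z₂` of length `n₁ + n₂`, whose label at the junction `z₁` is the conjunction
`α_{n₁} ∧ α'₀`; conversely cutting a spliced chain at its `n₁`-th node recovers the two pieces.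
The middle point `z₁` lies strictly between `z₀` and `z₂` exactly when both chains are nontrivial,
and the disjuncts `z₀ > z₁`, `z₀ = z₁` are incompatible with `z₀ < z₁`; composition therefore
distributes over the disjunctions and keeps only spliced pairs of nontrivial chains.
-/

def spliceSeq {α : Type*} (n : ℕ) (x y : ℕ → α) : ℕ → α :=
  fun i => if i < n then x i else y (i - n)

section spliceSeq

variable {α : Type*} {n : ℕ} {x y : ℕ → α}

@[simp]
lemma spliceSeq_of_lt {i : ℕ} (hi : i < n) : spliceSeq n x y i = x i := if_pos hi

@[simp]
lemma spliceSeq_add (i : ℕ) : spliceSeq n x y (n + i) = y i := by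
  simp [spliceSeq]

lemma spliceSeq_of_le_of_eq (hxy : x n = y 0) {i : ℕ} (hi : i ≤ n) : spliceSeq n x y i = x i := by
  rcases hi.lt_or_eq with hi | rfl
  · exact spliceSeq_of_lt hi
  · simp [spliceSeq, hxy]

end spliceSeq

def spliceNodeLabels {σ : Type} (n₁ : ℕ) (a₁ a₂ : ℕ → QF σ) : ℕ → QF σ :=
  spliceSeq n₁ a₁ (Function.update a₂ 0 ((a₁ n₁).and (a₂ 0)))

@[simp]
lemma sat_spliceNodeLabels_self {σ T : Type} {I : σ → Set T} {n₁ : ℕ} {a₁ a₂ : ℕ → QF σ} {t : T} :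
    (spliceNodeLabels n₁ a₁ a₂ n₁).sat I t ↔ (a₁ n₁).sat I t ∧ (a₂ 0).sat I t := by
  simp [spliceNodeLabels, spliceSeq, QF.sat]

section Chain

variable {σ T : Type} [LinearOrder T] {I : σ → Set T}

/-- A witness for `chainSat`, re-indexed by `ℕ` (values beyond `n` are irrelevant) so that
witnesses can be spliced without `Fin` casts. -/
structure IsChainWitness (I : σ → Set T) (n : ℕ) (a b : ℕ → QF σ) (x : ℕ → T) : Prop where
  lt_succ : ∀ i < n, x i < x (i + 1)
  sat_node : ∀ i ≤ n, (a i).sat I (x i)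
  sat_gap : ∀ i < n, ∀ y, x i < y → y < x (i + 1) → (b i).sat I y

lemma chainSat_iff_exists_isChainWitness {n : ℕ} {a b : ℕ → QF σ} {z₀ z₁ : T} :
    chainSat I n a b z₀ z₁ ↔ ∃ x : ℕ → T, x 0 = z₀ ∧ x n = z₁ ∧ IsChainWitness I n a b x := by
  constructor
  · rintro ⟨x, rfl, rfl, hmono, hnode, hgap⟩
    let x' : ℕ → T := fun i => x ⟨min i n, by omega⟩
    have hx' : ∀ i (hi : i ≤ n), x' i = x ⟨i, by omega⟩ := fun i hi => by
      simp only [x', min_eq_left hi]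
    refine ⟨x', hx' 0 (Nat.zero_le n), hx' n le_rfl, ⟨fun i hi => ?_, fun i hi => ?_, ?_⟩⟩
    · rw [hx' i hi.le, hx' (i + 1) hi]
      exact hmono (Fin.mk_lt_mk.2 i.lt_succ_self)
    · rw [hx' i hi]
      exact hnode ⟨i, by omega⟩
    · intro i hi y hy₀ hy₁
      rw [hx' i hi.le] at hy₀
      rw [hx' (i + 1) hi] at hy₁
      exact hgap ⟨i, hi⟩ y hy₀ hy₁
  · rintro ⟨x, hx0, hxn, hx⟩
    refine ⟨fun j => x j, hx0, hxn, Fin.strictMono_iff_lt_succ.2 fun i => hx.lt_succ i i.isLt,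
      fun j => hx.sat_node j (Nat.le_of_lt_succ j.isLt), fun j => hx.sat_gap j j.isLt⟩

lemma chainSat_lt_iff {n : ℕ} {a b : ℕ → QF σ} {z₀ z₁ : T} (h : chainSat I n a b z₀ z₁) :
    z₀ < z₁ ↔ n ≠ 0 := by
  obtain ⟨x, rfl, rfl, hmono, -⟩ := h
  rcases Nat.eq_zero_or_pos n with rfl | hn
  · simp [Fin.last]
  · exact iff_of_true (hmono (by simp [Fin.lt_def, hn])) hn.ne'

section Splice

variable {n₁ n₂ : ℕ} {a₁ b₁ a₂ b₂ : ℕ → QF σ}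

lemma IsChainWitness.splice {x y : ℕ → T} (hx : IsChainWitness I n₁ a₁ b₁ x)
    (hy : IsChainWitness I n₂ a₂ b₂ y) (hxy : x n₁ = y 0) :
    IsChainWitness I (n₁ + n₂) (spliceNodeLabels n₁ a₁ a₂) (spliceSeq n₁ b₁ b₂)
      (spliceSeq n₁ x y) := by
  refine ⟨fun i hi => ?_, fun i hi => ?_, fun i hi => ?_⟩
  · rcases lt_or_ge i n₁ with hi₁ | hi₁
    · rw [spliceSeq_of_le_of_eq hxy hi₁.le, spliceSeq_of_le_of_eq hxy hi₁]
      exact hx.lt_succ i hi₁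
    · obtain ⟨k, rfl⟩ := Nat.exists_eq_add_of_le hi₁
      rw [add_assoc, spliceSeq_add, spliceSeq_add]
      exact hy.lt_succ k (by omega)
  · rcases lt_or_ge i n₁ with hi₁ | hi₁
    · simpa [spliceNodeLabels, hi₁] using hx.sat_node i hi₁.le
    · obtain ⟨k, rfl⟩ := Nat.exists_eq_add_of_le hi₁
      rcases k with _ | k
      · rw [add_zero, spliceSeq_of_le_of_eq hxy le_rfl, sat_spliceNodeLabels_self]
        exact ⟨hx.sat_node n₁ le_rfl, hxy ▸ hy.sat_node 0 (Nat.zero_le _)⟩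
      · simpa [spliceNodeLabels] using hy.sat_node (k + 1) (by omega)
  · rcases lt_or_ge i n₁ with hi₁ | hi₁
    · rw [spliceSeq_of_le_of_eq hxy hi₁.le, spliceSeq_of_le_of_eq hxy hi₁, spliceSeq_of_lt hi₁]
      exact hx.sat_gap i hi₁
    · obtain ⟨k, rfl⟩ := Nat.exists_eq_add_of_le hi₁
      rw [add_assoc, spliceSeq_add, spliceSeq_add, spliceSeq_add]
      exact hy.sat_gap k (by omega)

lemma IsChainWitness.left_of_splice {w : ℕ → T}
    (hw : IsChainWitness I (n₁ + n₂) (spliceNodeLabels n₁ a₁ a₂) (spliceSeq n₁ b₁ b₂) w) :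
    IsChainWitness I n₁ a₁ b₁ w := by
  refine ⟨fun i hi => hw.lt_succ i (by omega), fun i hi => ?_, fun i hi => ?_⟩
  · rcases hi.lt_or_eq with hi | rfl
    · simpa [spliceNodeLabels, hi] using hw.sat_node i (by omega)
    · exact (sat_spliceNodeLabels_self.1 (hw.sat_node i (by omega))).1
  · simpa [hi] using hw.sat_gap i (by omega)

lemma IsChainWitness.right_of_splice {w : ℕ → T}
    (hw : IsChainWitness I (n₁ + n₂) (spliceNodeLabels n₁ a₁ a₂) (spliceSeq n₁ b₁ b₂) w) :
    IsChainWitness I n₂ a₂ b₂ (fun i => w (n₁ + i)) := by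
  refine ⟨fun i hi => hw.lt_succ (n₁ + i) (by omega), fun i hi => ?_, fun i hi => ?_⟩
  · rcases i with _ | i
    · exact (sat_spliceNodeLabels_self.1 (hw.sat_node n₁ (by omega))).2
    · simpa [spliceNodeLabels] using hw.sat_node (n₁ + (i + 1)) (by omega)
  · have := hw.sat_gap (n₁ + i) (by omega)
    rwa [spliceSeq_add] at this

lemma chainSat_splice_iff {z₀ z₂ : T} :
    (∃ z₁, chainSat I n₁ a₁ b₁ z₀ z₁ ∧ chainSat I n₂ a₂ b₂ z₁ z₂) ↔
      chainSat I (n₁ + n₂) (spliceNodeLabels n₁ a₁ a₂) (spliceSeq n₁ b₁ b₂) z₀ z₂ := by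
  simp only [chainSat_iff_exists_isChainWitness]
  constructor
  · rintro ⟨z₁, ⟨x, rfl, rfl, hx⟩, ⟨y, hy₀, rfl, hy⟩⟩
    exact ⟨spliceSeq n₁ x y, spliceSeq_of_le_of_eq hy₀.symm (Nat.zero_le _), spliceSeq_add n₂,
      hx.splice hy hy₀.symm⟩
  · rintro ⟨w, rfl, rfl, hw⟩
    exact ⟨w n₁, ⟨w, rfl, rfl, hw.left_of_splice⟩, ⟨_, rfl, rfl, hw.right_of_splice⟩⟩

end Splice

def IntervalEA.comp : IntervalEA σ → IntervalEA σ → List (IntervalEA σ)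
  | .chain n₁ a₁ b₁, .chain n₂ a₂ b₂ =>
    if n₁ ≠ 0 ∧ n₂ ≠ 0 then [.chain (n₁ + n₂) (spliceNodeLabels n₁ a₁ a₂) (spliceSeq n₁ b₁ b₂)]
    else []
  | _, _ => []

lemma IntervalEA.exists_mem_comp_sat_iff (f g : IntervalEA σ) (z₀ z₂ : T) :
    (∃ h ∈ f.comp g, h.sat I z₀ z₂) ↔
      ∃ z₁, z₀ < z₁ ∧ z₁ < z₂ ∧ f.sat I z₀ z₁ ∧ g.sat I z₁ z₂ := by
  cases f with
  | gt | eq =>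
    simp only [comp, List.not_mem_nil, false_and, exists_false, false_iff]
    rintro ⟨z₁, h₀₁, -, h, -⟩
    simp only [sat] at h
    order
  | chain n₁ a₁ b₁ =>
    cases g with
    | gt | eq =>
      simp only [comp, List.not_mem_nil, false_and, exists_false, false_iff]
      rintro ⟨z₁, -, h₁₂, -, h⟩
      simp only [sat] at h
      order
    | chain n₂ a₂ b₂ =>
      by_cases hn : n₁ ≠ 0 ∧ n₂ ≠ 0
      · simp only [comp, if_pos hn, List.mem_singleton, exists_eq_left, sat,
          ← chainSat_splice_iff]
        exact exists_congr fun z₁ => ⟨fun ⟨h₁, h₂⟩ => ⟨(chainSat_lt_iff h₁).2 hn.1,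
          (chainSat_lt_iff h₂).2 hn.2, h₁, h₂⟩, fun ⟨_, _, h₁, h₂⟩ => ⟨h₁, h₂⟩⟩
      · simp only [comp, if_neg hn, List.not_mem_nil, false_and, exists_false, sat, false_iff]
        rintro ⟨z₁, h₀₁, h₁₂, h₁, h₂⟩
        exact hn ⟨(chainSat_lt_iff h₁).1 h₀₁, (chainSat_lt_iff h₂).1 h₁₂⟩

end Chain

/-- existential composition of (z₀,z₁)-D∃∀ formulas: if φ₁(z₀,z₁) and
φ₂(z₁,z₂) are disjunctions of (z₀,z₁)-∃∀ formulas, then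
∃z₁ (z₀ < z₁ < z₂ ∧ φ₁(z₀,z₁) ∧ φ₂(z₁,z₂)) is equivalent over all chains to such a
disjunction in (z₀,z₂). -/
theorem interval_ea_composition (σ : Type) (L₁ L₂ : List (IntervalEA σ)) :
    ∃ L : List (IntervalEA σ),
      ∀ (T : Type) [LinearOrder T] (I : σ → Set T) (z₀ z₂ : T),
        (∃ z₁, z₀ < z₁ ∧ z₁ < z₂ ∧
            (∃ f ∈ L₁, f.sat I z₀ z₁) ∧ (∃ f ∈ L₂, f.sat I z₁ z₂)) ↔
          ∃ f ∈ L, f.sat I z₀ z₂ := by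
  refine ⟨L₁.flatMap fun f => L₂.flatMap f.comp, fun T _ I z₀ z₂ => ?_⟩
  calc (∃ z₁, z₀ < z₁ ∧ z₁ < z₂ ∧ (∃ f ∈ L₁, f.sat I z₀ z₁) ∧ ∃ g ∈ L₂, g.sat I z₁ z₂)
      ↔ ∃ f ∈ L₁, ∃ g ∈ L₂, ∃ z₁, z₀ < z₁ ∧ z₁ < z₂ ∧ f.sat I z₀ z₁ ∧ g.sat I z₁ z₂ := by
        aesop
    _ ↔ ∃ f ∈ L₁, ∃ g ∈ L₂, ∃ h ∈ f.comp g, h.sat I z₀ z₂ := by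
        simp only [IntervalEA.exists_mem_comp_sat_iff]
    _ ↔ ∃ h ∈ L₁.flatMap fun f => L₂.flatMap f.comp, h.sat I z₀ z₂ := by
        simp only [List.mem_flatMap]
        aesop
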